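/- arXiv:2109.12760 — 2 statements merged into one kernel-verified Lean document; each statement's English description precedes it below -/
import Mathlib

section
/- The union ⋃_{i=1}^{104} F_i(□) of the 104 closed first-level squares is a connected subset of ℝ². -/
noncomputable section

/-- The plane ℝ² with the Euclidean metric. -/
abbrev Plane : Type := EuclideanSpace ℝ (Fin 2)

/-- The point (s, t) ∈ ℝ². -/
def pt (s t : ℝ) : Plane := WithLp.toLp 2 ![s, t]

/-- The unit square □ = [0,1] × [0,1]. -/
def unitSq : Set Plane := {z : Plane | z 0 ∈ Set.Icc (0:ℝ) 1 ∧ z 1 ∈ Set.Icc (0:ℝ) 1}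

/-- Vertical reflection Γ_v(x₁,x₂) = (x₁, 1-x₂). -/
def Γv : Plane → Plane := fun x => pt (x 0) (1 - x 1)

/-- Horizontal reflection Γ_h(x₁,x₂) = (1-x₁, x₂). -/
def Γh : Plane → Plane := fun x => pt (1 - x 0) (x 1)

/-- Diagonal reflection Γ_{d₁}(x₁,x₂) = (x₂, x₁). -/
def Γd₁ : Plane → Plane := fun x => pt (x 1) (x 0)

/-- Anti-diagonal reflection Γ_{d₂}(x₁,x₂) = (1-x₂, 1-x₁). -/
def Γd₂ : Plane → Plane := fun x => pt (1 - x 1) (1 - x 0)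

/-- Counter-clockwise rotation by π/2 around the center: Γ_{r₁}(x₁,x₂) = (1-x₂, x₁).
    The rotations Γ_{r_j} are `Γr^[j]`, and Γ_{r₄} = `Γr^[4]` = id. -/
def Γr : Plane → Plane := fun x => pt (1 - x 1) (x 0)

/-- The basic contraction ratio a = √(7/24) − 1/2. -/
def aa : ℝ := Real.sqrt (7/24) - 1/2

/-- The maps F_i for 1 ≤ i ≤ 13:
    F_{2j+1}(x) = a·x + (j/24, 0) (0 ≤ j ≤ 5), F_{2j+2}(x) = a²·x + (a + j/24, 0) (0 ≤ j ≤ 5),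
    F_{13}(x) = (1/4)·x + (1/4, 0). -/
def Fbase : ℕ → Plane → Plane := fun i x =>
  if i = 13 then (1/4 : ℝ) • x + pt (1/4) 0
  else if i % 2 = 1 then aa • x + pt ((((i - 1) / 2 : ℕ) : ℝ) / 24) 0
  else aa ^ 2 • x + pt (aa + (((i - 2) / 2 : ℕ) : ℝ) / 24) 0

/-- The maps F_i for 1 ≤ i ≤ 26: F_i = Γ_h ∘ F_{27-i} ∘ Γ_h for 14 ≤ i ≤ 26. -/
def Fq : ℕ → Plane → Plane := fun i =>
  if i ≤ 13 then Fbase i else Γh ∘ Fbase (27 - i) ∘ Γh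

/-- The full iterated function system F_1, …, F_104:
    F_{i+25j} = Γ_{r_j} ∘ F_i ∘ Γ_{r_{4-j}} for 1 ≤ i ≤ 25, 1 ≤ j ≤ 3 (here for
    27 ≤ i ≤ 100 one has j = (i-1)/25 ∈ {1,2,3} and i - 25j ∈ {1,…,25});
    F_{101},…,F_{104} are the four central quarter squares. -/
def Fmap : ℕ → Plane → Plane := fun i =>
  if i ≤ 26 then Fq i
  else if i ≤ 100 then Γr^[(i - 1) / 25] ∘ Fq (i - 25 * ((i - 1) / 25)) ∘ Γr^[4 - (i - 1) / 25]
  else if i = 101 then fun x => (1/4 : ℝ) • x + pt (1/4) (1/4)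
  else if i = 102 then fun x => (1/4 : ℝ) • x + pt (1/2) (1/4)
  else if i = 103 then fun x => (1/4 : ℝ) • x + pt (1/2) (1/2)
  else fun x => (1/4 : ℝ) • x + pt (1/4) (1/2)

/-- The contraction ratio of F_i for 1 ≤ i ≤ 13. -/
def ρbase : ℕ → ℝ := fun i =>
  if i = 13 then 1/4 else if i % 2 = 1 then aa else aa ^ 2

/-- The contraction ratio of F_i for 1 ≤ i ≤ 26. -/
def ρq : ℕ → ℝ := fun i => if i ≤ 13 then ρbase i else ρbase (27 - i)

/-- The contraction ratio ρ_i of F_i for 1 ≤ i ≤ 104. -/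
def rho : ℕ → ℝ := fun i =>
  if i ≤ 26 then ρq i
  else if i ≤ 100 then ρq (i - 25 * ((i - 1) / 25))
  else 1/4

end

/-!
The 100 boundary squares form a chain in which consecutive squares share a corner: along the
bottom edge `F_b(1,0) = F_{b+1}(0,0)`, which is where `a² + a = 1/24` enters, and the other three
sides are rotated copies of the bottom one, glued at the corners of `□`. The four central squares
form a second chain, attached to `F₁₃` at `(1/4, 1/4)`. A chain of connected sets in which
consecutive members meet has connected union.
-/

lemma aa_sq_add_aa : aa ^ 2 + aa = 1 / 24 := by
  have h : Real.sqrt (7 / 24) ^ 2 = 7 / 24 := Real.sq_sqrt (by norm_num)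
  unfold aa
  linarith

@[fun_prop]
lemma Continuous.pt {X : Type*} [TopologicalSpace X] {f g : X → ℝ} (hf : Continuous f)
    (hg : Continuous g) : Continuous fun x => pt (f x) (g x) := by
  unfold _root_.pt
  refine (PiLp.continuous_toLp 2 _).comp (continuous_pi fun i => ?_)
  fin_cases i <;> simpa

lemma continuous_Fmap (i : ℕ) : Continuous (Fmap i) := by
  have hΓh : Continuous Γh := by unfold Γh; fun_prop
  have hΓr : Continuous Γr := by unfold Γr; fun_prop
  have hFq (k : ℕ) : Continuous (Fq k) := by
    unfold Fq Fbase; split_ifs <;> fun_prop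
  unfold Fmap; split_ifs <;> fun_prop

lemma isConnected_unitSq : IsConnected unitSq := by
  refine Convex.isConnected ?_ ⟨pt 0 0, by norm_num [unitSq, pt]⟩
  exact ((convex_Icc 0 1).linear_preimage (EuclideanSpace.proj 0).toLinearMap).inter
    ((convex_Icc 0 1).linear_preimage (EuclideanSpace.proj 1).toLinearMap)

lemma mapsTo_Γr_unitSq : Set.MapsTo Γr unitSq unitSq := by
  rintro x ⟨⟨h0, h1⟩, h2, h3⟩
  simp only [unitSq, Γr, pt, Set.mem_Icc]
  norm_num
  constructor <;> constructor <;> linarith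

lemma Γr_iterate_four (x : Plane) : Γr^[4] x = x := by
  ext j; fin_cases j <;> simp [Γr, pt]

lemma Γr_Fq_one (x : Plane) : Γr (Fq 1 x) = Fq 26 (Γr x) := by
  ext j; fin_cases j <;> norm_num [Γr, Fq, Fbase, Γh, pt]

lemma Fq_one_zero (b : ℕ) (h1 : 1 ≤ b) (h2 : b ≤ 25) :
    Fq b (pt 1 0) = Fq (b + 1) (pt 0 0) := by
  interval_cases b <;>
    (ext j; fin_cases j <;> norm_num [Fq, Fbase, Γh, pt] <;> linarith [aa_sq_add_aa])

/-- Since `F₂₆` is also the rotated copy of `F₁`, the formula holds for `m = 25` too. -/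
lemma Fmap_succ_eq (m : ℕ) (hm : m < 100) :
    Fmap (m + 1) = Γr^[m / 25] ∘ Fq (m % 25 + 1) ∘ Γr^[4 - m / 25] := by
  funext x
  rcases lt_or_ge m 25 with h | h
  · rw [Function.comp_apply, Function.comp_apply, Nat.div_eq_of_lt h, Nat.mod_eq_of_lt h,
      Γr_iterate_four]
    simp [Fmap, show m + 1 ≤ 26 by omega]
  rcases eq_or_lt_of_le h with rfl | h
  · show Fq 26 x = Γr^[1] (Fq 1 (Γr^[3] x))
    rw [Function.iterate_one, Γr_Fq_one]
    exact congrArg (Fq 26) (Γr_iterate_four x).symm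
  have hj : (m + 1 - 1) / 25 = m / 25 := by omega
  have hb : m + 1 - 25 * (m / 25) = m % 25 + 1 := by omega
  simp only [Fmap, if_neg (show ¬ m + 1 ≤ 26 by omega), if_pos (show m + 1 ≤ 100 by omega), hj, hb]

lemma Fmap_succ_Γr_iterate (m : ℕ) (hm : m < 100) (x : Plane) :
    Fmap (m + 1) (Γr^[m / 25] x) = Γr^[m / 25] (Fq (m % 25 + 1) x) := by
  rw [Fmap_succ_eq m hm, Function.comp_apply, Function.comp_apply,
    ← Function.iterate_add_apply, Nat.sub_add_cancel (by omega), Γr_iterate_four]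

lemma image_inter_image_nonempty_of_eq {α β : Type*} {s : Set α} {f g : α → β} {p q : α}
    (hp : p ∈ s) (hq : q ∈ s) (h : f p = g q) : (f '' s ∩ g '' s).Nonempty :=
  ⟨f p, Set.mem_image_of_mem f hp, h ▸ Set.mem_image_of_mem g hq⟩

lemma pt_mem_unitSq {s t : ℝ} (hs : s ∈ Set.Icc 0 1) (ht : t ∈ Set.Icc 0 1) :
    pt s t ∈ unitSq := by
  simpa [unitSq, pt] using And.intro hs ht

lemma Fmap_image_inter_succ_nonempty_boundary (n : ℕ) (hn₁ : 1 ≤ n) (hn₂ : n < 100) :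
    (Fmap n '' unitSq ∩ Fmap (n + 1) '' unitSq).Nonempty := by
  obtain ⟨m, rfl⟩ : ∃ m, n = m + 1 := ⟨n - 1, by omega⟩
  have hmaps (k : ℕ) {s t : ℝ} (hs : s ∈ Set.Icc 0 1) (ht : t ∈ Set.Icc 0 1) :
      Γr^[k] (pt s t) ∈ unitSq :=
    mapsTo_Γr_unitSq.iterate k (pt_mem_unitSq hs ht)
  have h0 : (0 : ℝ) ∈ Set.Icc 0 1 := by norm_num
  have h1 : (1 : ℝ) ∈ Set.Icc 0 1 := by norm_num
  rcases lt_or_eq_of_le (show m % 25 ≤ 24 by omega) with hb | hb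
  · refine image_inter_image_nonempty_of_eq (hmaps (m / 25) h1 h0) (hmaps (m / 25) h0 h0) ?_
    have hj : (m + 1) / 25 = m / 25 := by omega
    have hb' : (m + 1) % 25 = m % 25 + 1 := by omega
    rw [Fmap_succ_Γr_iterate m (by omega), ← hj, Fmap_succ_Γr_iterate (m + 1) (by omega), hj, hb',
      Fq_one_zero _ (by omega) (by omega)]
  · -- passing to the next side goes through the corner square `F₂₆ = Γr ∘ F₁ ∘ Γr⁻¹`
    refine image_inter_image_nonempty_of_eq (hmaps (m / 25) h1 h0) (hmaps (m / 25 + 1) h0 h1) ?_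
    have hj : (m + 1) / 25 = m / 25 + 1 := by omega
    have hb' : (m + 1) % 25 = 0 := by omega
    rw [Fmap_succ_Γr_iterate m (by omega), ← hj, Fmap_succ_Γr_iterate (m + 1) (by omega), hj, hb',
      hb, Function.iterate_succ_apply, Γr_Fq_one, Fq_one_zero 25 (by norm_num) (by norm_num)]
    congr 2
    ext j; fin_cases j <;> simp [Γr, pt]

lemma Fmap_image_inter_succ_nonempty_center (n : ℕ) (hn₁ : 101 ≤ n) (hn₂ : n < 104) :
    (Fmap n '' unitSq ∩ Fmap (n + 1) '' unitSq).Nonempty := by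
  have h0 : (0 : ℝ) ∈ Set.Icc 0 1 := by norm_num
  have h1 : (1 : ℝ) ∈ Set.Icc 0 1 := by norm_num
  interval_cases n
  · exact image_inter_image_nonempty_of_eq (pt_mem_unitSq h1 h0) (pt_mem_unitSq h0 h0)
      (by ext j; fin_cases j <;> norm_num [Fmap, pt])
  · exact image_inter_image_nonempty_of_eq (pt_mem_unitSq h0 h1) (pt_mem_unitSq h0 h0)
      (by ext j; fin_cases j <;> norm_num [Fmap, pt])
  · exact image_inter_image_nonempty_of_eq (pt_mem_unitSq h0 h0) (pt_mem_unitSq h1 h0)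
      (by ext j; fin_cases j <;> norm_num [Fmap, pt])

lemma Fmap_image_inter_nonempty_13_101 :
    (Fmap 13 '' unitSq ∩ Fmap 101 '' unitSq).Nonempty :=
  image_inter_image_nonempty_of_eq (pt_mem_unitSq (by norm_num) (by norm_num))
    (pt_mem_unitSq (by norm_num) (by norm_num))
    (by ext j; fin_cases j <;> norm_num [Fmap, Fq, Fbase, pt] :
      Fmap 13 (pt 0 1) = Fmap 101 (pt 0 0))

lemma isConnected_biUnion_Icc_Fmap_image {a b : ℕ} (hab : a ≤ b)
    (h : ∀ n, a ≤ n → n < b → (Fmap n '' unitSq ∩ Fmap (n + 1) '' unitSq).Nonempty) :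
    IsConnected (⋃ i ∈ Set.Icc a b, Fmap i '' unitSq) :=
  IsConnected.biUnion_of_chain (Set.nonempty_Icc.2 hab) Set.ordConnected_Icc
    (fun i _ => isConnected_unitSq.image _ (continuous_Fmap i).continuousOn)
    (fun n hn hn' => h n hn.1 (by simpa using hn'.2))

/-- The union ⋃_{i=1}^{104} F_i(□) of the 104 closed first-level squares is connected. -/
theorem stmt5 :
    IsConnected (⋃ i ∈ Finset.Icc 1 104, Fmap i '' unitSq) := by
  have hsplit : (⋃ i ∈ Finset.Icc 1 104, Fmap i '' unitSq) =
      (⋃ i ∈ Set.Icc 1 100, Fmap i '' unitSq) ∪ ⋃ i ∈ Set.Icc 101 104, Fmap i '' unitSq := by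
    have hmem (i : ℕ) : i ∈ Finset.Icc 1 104 ↔ i ∈ Set.Icc 1 100 ∪ Set.Icc 101 104 := by
      simp only [Finset.mem_Icc, Set.mem_union, Set.mem_Icc]; omega
    simp_rw [hmem, Set.biUnion_union]
  rw [hsplit]
  refine IsConnected.union ?_
    (isConnected_biUnion_Icc_Fmap_image (by norm_num) Fmap_image_inter_succ_nonempty_boundary)
    (isConnected_biUnion_Icc_Fmap_image (by norm_num) Fmap_image_inter_succ_nonempty_center)
  obtain ⟨x, h13, h101⟩ := Fmap_image_inter_nonempty_13_101
  exact ⟨x, Set.mem_biUnion (by norm_num) h13, Set.mem_biUnion (by norm_num) h101⟩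
end

section
/- Each of the four edges of the unit square is contained in the attractor K; in particular the bottom edge [0,1]×{0} satisfies [0,1]×{0} = ⋃_{i=1}^{26} F_i([0,1]×{0}) and hence [0,1]×{0} ⊆ K, and by the symmetries of K the segments {1}×[0,1], [0,1]×{1} and {0}×[0,1] are also contained in K. -/
/-- The bottom edge [0,1] × {0} of the unit square. -/
def bottomE : Set Plane := {z : Plane | z 0 ∈ Set.Icc (0:ℝ) 1 ∧ z 1 = 0}

/-- The right edge {1} × [0,1] of the unit square. -/
def rightE : Set Plane := {z : Plane | z 0 = 1 ∧ z 1 ∈ Set.Icc (0:ℝ) 1}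

/-- The top edge [0,1] × {1} of the unit square. -/
def topE : Set Plane := {z : Plane | z 0 ∈ Set.Icc (0:ℝ) 1 ∧ z 1 = 1}

/-- The left edge {0} × [0,1] of the unit square. -/
def leftE : Set Plane := {z : Plane | z 0 = 0 ∧ z 1 ∈ Set.Icc (0:ℝ) 1}

/-!
The maps `F_1, …, F_26` act on the bottom edge as increasing affine maps `t ↦ ρ_i t + c_i`
whose images `[c_i, c_i + ρ_i]` are consecutive intervals of total length
`12 (a + a²) + 1/2 = 1`, so they tile `[0, 1]`.

A compact set `E` with `E ⊆ ⋃ F_i(E)` lies in `K`: at a point of `E` farthest from `K`, writing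
it as `F_i(y)` with `y ∈ E` shows that this distance is at most `1/4` of itself. The rotation
`Γ_{r₁}` conjugates the system to itself, so `Γ_{r₁}(K)` is such a set, and the other three edges
are rotations of the bottom one.
-/

open Set Metric
open scoped NNReal

theorem Isometry.iterate {X : Type*} [PseudoEMetricSpace X] {f : X → X} (hf : Isometry f) :
    ∀ n, Isometry f^[n]
  | 0 => isometry_id
  | n + 1 => (hf.iterate n).comp hf

theorem Monotone.biUnion_range_Icc_map_succ {α : Type*} [LinearOrder α] {p : ℕ → α}
    (hp : Monotone p) {n : ℕ} (hn : 0 < n) :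
    ⋃ i ∈ Finset.range n, Icc (p i) (p (i + 1)) = Icc (p 0) (p n) := by
  induction n with
  | zero => omega
  | succ n ih =>
    rcases n.eq_zero_or_pos with rfl | hn
    · simp
    rw [Finset.range_add_one, Finset.set_biUnion_insert, union_comm, ih hn,
      Icc_union_Icc_eq_Icc (hp n.zero_le) (hp n.le_succ)]

theorem dist_smul_add_const {E : Type*} [SeminormedAddCommGroup E] [NormedSpace ℝ E] {r : ℝ}
    (hr : 0 ≤ r) (v x y : E) : dist (r • x + v) (r • y + v) = r * dist x y := by
  rw [dist_add_right, dist_smul₀, Real.norm_of_nonneg hr]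

section SelfSimilar

variable {X ι : Type*} {f : ι → X → X} {S : Set ι}

theorem image_subset_biUnion_image_of_semiconj {g : X → X}
    (hg : ∀ i ∈ S, ∃ k ∈ S, g ∘ f i = f k ∘ g) {K : Set X} (hK : K ⊆ ⋃ i ∈ S, f i '' K) :
    g '' K ⊆ ⋃ k ∈ S, f k '' (g '' K) := by
  rintro _ ⟨x, hx, rfl⟩
  obtain ⟨i, hi, y, hy, rfl⟩ := mem_iUnion₂.1 (hK hx)
  obtain ⟨k, hk, hcomm⟩ := hg i hi
  exact mem_iUnion₂.2 ⟨k, hk, g y, mem_image_of_mem g hy, (congrFun hcomm y).symm⟩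

variable [MetricSpace X]

theorem LipschitzWith.infDist_apply_le {g : X → X} {c : ℝ≥0} (hg : LipschitzWith c g)
    {K : Set X} (hgK : MapsTo g K K) (hK : K.Nonempty) (y : X) :
    infDist (g y) K ≤ c * infDist y K := by
  have : Nonempty K := hK.to_subtype
  rw [infDist_eq_iInf (x := y), Real.mul_iInf_of_nonneg c.coe_nonneg]
  exact le_ciInf fun ⟨z, hz⟩ =>
    (infDist_le_dist_of_mem (hgK hz)).trans (hg.dist_le_mul y z)

theorem subset_of_subset_biUnion_image {c : ℝ≥0} (hc : c < 1)
    (hf : ∀ i ∈ S, LipschitzWith c (f i)) {K : Set X} (hK : IsClosed K) (hKne : K.Nonempty)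
    (hfK : ∀ i ∈ S, MapsTo (f i) K K) {E : Set X} (hE : IsCompact E)
    (hEf : E ⊆ ⋃ i ∈ S, f i '' E) : E ⊆ K := by
  rcases E.eq_empty_or_nonempty with rfl | hEne
  · exact empty_subset K
  obtain ⟨x₀, hx₀, hmax⟩ := hE.exists_isMaxOn hEne (continuous_infDist_pt K).continuousOn
  have hzero : infDist x₀ K = 0 := by
    obtain ⟨i, hi, y, hy, rfl⟩ := mem_iUnion₂.1 (hEf hx₀)
    have hcontract := (hf i hi).infDist_apply_le (hfK i hi) hKne y
    have hfar : infDist y K ≤ infDist (f i y) K := hmax hy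
    nlinarith [infDist_nonneg (x := y) (s := K), (show (c : ℝ) < 1 from hc)]
  intro x hx
  rw [hK.mem_iff_infDist_zero hKne]
  exact le_antisymm (hzero ▸ hmax hx) infDist_nonneg

end SelfSimilar

@[simp] lemma pt_apply_zero (s t : ℝ) : pt s t 0 = s := rfl

@[simp] lemma pt_apply_one (s t : ℝ) : pt s t 1 = t := rfl

lemma pt_eta (z : Plane) : pt (z 0) (z 1) = z := by
  ext i; fin_cases i <;> rfl

lemma pt_eq_iff {s t : ℝ} {z : Plane} : pt s t = z ↔ s = z 0 ∧ t = z 1 := by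
  constructor
  · rintro rfl; simp
  · rintro ⟨rfl, rfl⟩; exact pt_eta z

lemma smul_add_pt (r s t : ℝ) (x : Plane) :
    r • x + pt s t = pt (r * x 0 + s) (r * x 1 + t) := by
  ext i; fin_cases i <;> simp [pt]

lemma dist_eq_sqrt_coords (u v : Plane) :
    dist u v = √((u 0 - v 0) ^ 2 + (u 1 - v 1) ^ 2) := by
  simp [EuclideanSpace.dist_eq, Fin.sum_univ_two, Real.dist_eq, sq_abs]

lemma isometry_Γh : Isometry Γh :=
  Isometry.of_dist_eq fun u v => by
    simp only [dist_eq_sqrt_coords, Γh, pt_apply_zero, pt_apply_one]; ring_nf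

lemma isometry_Γr : Isometry Γr :=
  Isometry.of_dist_eq fun u v => by
    simp only [dist_eq_sqrt_coords, Γr, pt_apply_zero, pt_apply_one]; ring_nf

lemma Γr_apply_four (z : Plane) : Γr (Γr (Γr (Γr z))) = z := by
  simp only [Γr, pt_apply_zero, pt_apply_one, sub_sub_cancel, pt_eta]

lemma iterate_Γr_four : Γr^[4] = id := funext Γr_apply_four

lemma aa_pos : 0 < aa := by
  have h : (1/2 : ℝ) < √(7/24) := by
    rw [Real.lt_sqrt (by norm_num)]; norm_num
  unfold aa; linarith

lemma aa_add_sq : aa + aa ^ 2 = 1/24 := by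
  have h := Real.sq_sqrt (show (0:ℝ) ≤ 7/24 by norm_num)
  unfold aa; linear_combination h

lemma aa_lt : aa < 1/24 := by nlinarith [aa_add_sq, aa_pos]

lemma ρbase_pos (i : ℕ) : 0 < ρbase i := by
  unfold ρbase; split_ifs <;> positivity [aa_pos]

lemma ρq_pos (i : ℕ) : 0 < ρq i := by
  unfold ρq; split_ifs <;> exact ρbase_pos _

lemma rho_le (i : ℕ) : rho i ≤ 1/4 := by
  have hbase : ∀ k, ρbase k ≤ 1/4 := fun k => by
    unfold ρbase; split_ifs <;> nlinarith [aa_pos, aa_lt]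
  have hq : ∀ k, ρq k ≤ 1/4 := fun k => by unfold ρq; split_ifs <;> exact hbase _
  unfold rho; split_ifs <;> first | exact hq _ | norm_num

lemma dist_Fbase (i : ℕ) (x y : Plane) : dist (Fbase i x) (Fbase i y) = ρbase i * dist x y := by
  simp only [Fbase, ρbase]
  split_ifs <;> exact dist_smul_add_const (by positivity [aa_pos]) _ x y

lemma dist_Fq (i : ℕ) (x y : Plane) : dist (Fq i x) (Fq i y) = ρq i * dist x y := by
  simp only [Fq, ρq]
  split_ifs
  · exact dist_Fbase i x y
  · simp only [Function.comp_apply, isometry_Γh.dist_eq, dist_Fbase]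

lemma dist_Fmap (i : ℕ) (x y : Plane) : dist (Fmap i x) (Fmap i y) = rho i * dist x y := by
  simp only [Fmap, rho]
  split_ifs
  · exact dist_Fq i x y
  · simp only [Function.comp_apply, (isometry_Γr.iterate _).dist_eq, dist_Fq]
  all_goals exact dist_smul_add_const (by norm_num) _ x y

lemma lipschitzWith_Fmap (i : ℕ) : LipschitzWith (1/4) (Fmap i) :=
  LipschitzWith.of_dist_le_mul fun x y => by
    rw [dist_Fmap]; gcongr; exact_mod_cast rho_le i

-- `F_26` is defined both as `Γ_h ∘ F_1 ∘ Γ_h` and as `Γ_{r₁} ∘ F_1 ∘ Γ_{r₃}`; the two agree.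
lemma Fq_twentysix : Fq 26 = Γr ∘ Fq 1 ∘ Γr^[3] := by
  funext x
  norm_num [Fq, Fbase, Γh, Γr, smul_add_pt]

lemma Fmap_add_mul (b j : ℕ) (hb : b ∈ Finset.Icc 1 25) (hj : j ≤ 3) :
    Fmap (b + 25 * j) = Γr^[j] ∘ Fq b ∘ Γr^[4 - j] := by
  rw [Finset.mem_Icc] at hb
  obtain rfl | hj0 := Nat.eq_zero_or_pos j
  · rw [Nat.mul_zero, Nat.add_zero, Nat.sub_zero, iterate_Γr_four, Function.iterate_zero]
    simp [Fmap, show b ≤ 26 by omega]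
  by_cases h26 : b + 25 * j ≤ 26
  · obtain ⟨rfl, rfl⟩ : b = 1 ∧ j = 1 := by omega
    simpa [Fmap] using Fq_twentysix
  · have hj' : (b + 25 * j - 1) / 25 = j := by omega
    have hb' : b + 25 * j - 25 * j = b := by omega
    simp only [Fmap, if_neg h26, if_pos (show b + 25 * j ≤ 100 by omega), hj', hb']

lemma Γr_smul_add (r : ℝ) (c x : Plane) : Γr (r • x + c) = r • Γr x + pt (1 - r - c 1) (c 0) := by
  simp only [Γr, smul_add_pt, pt_eq_iff, PiLp.add_apply, PiLp.smul_apply, smul_eq_mul,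
    pt_apply_zero, pt_apply_one, and_true]
  ring

lemma Γr_comp_Fmap {i : ℕ} (hi : i ∈ Finset.Icc 1 104) :
    ∃ k ∈ Finset.Icc 1 104, Γr ∘ Fmap i = Fmap k ∘ Γr := by
  obtain ⟨hi1, hi104⟩ := Finset.mem_Icc.1 hi
  by_cases h100 : i ≤ 100
  · obtain ⟨b, hb, j, hj, rfl⟩ : ∃ b ∈ Finset.Icc 1 25, ∃ j ≤ 3, i = b + 25 * j :=
      ⟨i - 25 * ((i - 1) / 25), Finset.mem_Icc.2 ⟨by omega, by omega⟩, (i - 1) / 25, by omega,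
        by omega⟩
    have hb' := Finset.mem_Icc.1 hb
    refine ⟨b + 25 * ((j + 1) % 4), Finset.mem_Icc.2 ⟨by omega, by omega⟩, ?_⟩
    rw [Fmap_add_mul b j hb hj, Fmap_add_mul b _ hb (by omega)]
    funext x
    interval_cases j <;> simp [Γr_apply_four]
  · interval_cases i
    · exact ⟨102, by simp, funext fun x => by norm_num [Fmap, Γr_smul_add]⟩
    · exact ⟨103, by simp, funext fun x => by norm_num [Fmap, Γr_smul_add]⟩
    · exact ⟨104, by simp, funext fun x => by norm_num [Fmap, Γr_smul_add]⟩
    · exact ⟨101, by simp, funext fun x => by norm_num [Fmap, Γr_smul_add]⟩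

noncomputable def edgeCut (i : ℕ) : ℝ := ∑ k ∈ Finset.range i, ρq (k + 1)

lemma monotone_edgeCut : Monotone edgeCut :=
  monotone_nat_of_le_succ fun i => by
    simp only [edgeCut, Finset.sum_range_succ, le_add_iff_nonneg_right]
    exact (ρq_pos _).le

lemma edgeCut_twentysix : edgeCut 26 = 1 := by
  simp only [edgeCut, ρq, ρbase, Finset.sum_range_succ, Finset.sum_range_zero, Nat.reduceAdd,
    Nat.reduceLeDiff, Nat.reduceSub, Nat.reduceMod, Nat.reduceEqDiff, reduceIte]
  linarith [aa_add_sq]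

lemma Fmap_succ_pt {i : ℕ} (hi : i < 26) (u : ℝ) :
    Fmap (i + 1) (pt u 0) = pt (ρq (i + 1) * u + edgeCut i) 0 := by
  interval_cases i <;>
    simp [Fmap, Fq, Fbase, Γh, ρq, ρbase, edgeCut, Finset.sum_range_succ, smul_add_pt,
      pt_eq_iff] <;>
    linarith [aa_add_sq]

lemma bottomE_eq_image : bottomE = (fun u => pt u 0) '' Icc 0 1 := by
  ext z
  simp only [bottomE, mem_ofPred_eq, mem_image, pt_eq_iff]
  constructor
  · rintro ⟨hz, hz1⟩; exact ⟨z 0, hz, rfl, hz1.symm⟩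
  · rintro ⟨u, hu, rfl, h1⟩; exact ⟨hu, h1.symm⟩

lemma isCompact_bottomE : IsCompact bottomE := by
  rw [bottomE_eq_image]
  exact isCompact_Icc.image (by unfold pt; fun_prop)

lemma image_Fmap_bottomE {i : ℕ} (hi : i < 26) :
    Fmap (i + 1) '' bottomE = (fun u => pt u 0) '' Icc (edgeCut i) (edgeCut (i + 1)) := by
  calc Fmap (i + 1) '' bottomE
      = (fun u => pt u 0) '' ((fun u => ρq (i + 1) * u + edgeCut i) '' Icc 0 1) := by
        rw [bottomE_eq_image, image_image, image_image]
        simp only [Fmap_succ_pt hi]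
    _ = _ := by
        rw [image_affine_Icc' (ρq_pos _)]
        congr 2 <;> simp [edgeCut, Finset.sum_range_succ, add_comm]

lemma bottomE_eq_biUnion : bottomE = ⋃ i ∈ Finset.Icc 1 26, Fmap i '' bottomE := by
  have hidx : Finset.Icc 1 26 = (Finset.range 26).image (· + 1) := by decide
  rw [hidx, Finset.set_biUnion_finset_image]
  calc bottomE = (fun u => pt u 0) '' Icc (edgeCut 0) (edgeCut 26) := by
        rw [bottomE_eq_image, edgeCut_twentysix]; simp [edgeCut]
    _ = ⋃ i ∈ Finset.range 26, (fun u => pt u 0) '' Icc (edgeCut i) (edgeCut (i + 1)) := by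
        rw [← monotone_edgeCut.biUnion_range_Icc_map_succ (by norm_num), image_iUnion₂]
    _ = ⋃ i ∈ Finset.range 26, Fmap (i + 1) '' bottomE :=
        iUnion₂_congr fun i hi => (image_Fmap_bottomE (Finset.mem_range.1 hi)).symm

lemma image_Γr_eq_preimage (s : Set Plane) : Γr '' s = (fun z => pt (z 1) (1 - z 0)) ⁻¹' s :=
  congrFun (image_eq_preimage_of_inverse (f := Γr) (fun z => by simp [Γr, pt_eta])
    (fun z => by simp [Γr, pt_eta])) s

lemma image_Γr_bottomE : Γr '' bottomE = rightE := by
  ext z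
  simp only [image_Γr_eq_preimage, mem_preimage, bottomE, rightE, mem_ofPred_eq, mem_Icc, pt_apply_zero,
    pt_apply_one]
  grind

lemma image_Γr_rightE : Γr '' rightE = topE := by
  ext z
  simp only [image_Γr_eq_preimage, mem_preimage, rightE, topE, mem_ofPred_eq, mem_Icc, pt_apply_zero,
    pt_apply_one]
  grind

lemma image_Γr_topE : Γr '' topE = leftE := by
  ext z
  simp only [image_Γr_eq_preimage, mem_preimage, topE, leftE, mem_ofPred_eq, mem_Icc, pt_apply_zero,
    pt_apply_one]
  grind

/-- Each of the four edges of the unit square is contained in the attractor K; the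
    bottom edge satisfies [0,1]×{0} = ⋃_{i=1}^{26} F_i([0,1]×{0}), hence lies in K,
    and by symmetry so do the other three edges. -/
theorem stmt8 (K : Set Plane) (hne : K.Nonempty) (hcomp : IsCompact K)
    (hK : K = ⋃ i ∈ Finset.Icc 1 104, Fmap i '' K) :
    bottomE = ⋃ i ∈ Finset.Icc 1 26, Fmap i '' bottomE ∧
    bottomE ⊆ K ∧ rightE ⊆ K ∧ topE ⊆ K ∧ leftE ⊆ K := by
  have hmaps : ∀ i ∈ Finset.Icc 1 104, MapsTo (Fmap i) K K := fun i hi x hx =>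
    hK ▸ mem_biUnion (Finset.mem_coe.2 hi) (mem_image_of_mem _ hx)
  have hsub : ∀ E, IsCompact E → E ⊆ ⋃ i ∈ Finset.Icc 1 104, Fmap i '' E → E ⊆ K :=
    fun E hE hEf => subset_of_subset_biUnion_image (S := ↑(Finset.Icc 1 104)) (c := 1/4)
      (by norm_num) (fun i _ => lipschitzWith_Fmap i) hcomp.isClosed hne hmaps hE hEf
  have hbottom : bottomE ⊆ K := hsub _ isCompact_bottomE <| bottomE_eq_biUnion.subset.trans <|
    biUnion_subset_biUnion_left (Finset.coe_subset.2 (Finset.Icc_subset_Icc_right (by norm_num)))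
  have hrot : ∀ E ⊆ K, Γr '' E ⊆ K := fun E hE => (image_mono hE).trans <|
    hsub _ (hcomp.image isometry_Γr.continuous)
      (image_subset_biUnion_image_of_semiconj (fun i hi => Γr_comp_Fmap hi) hK.subset)
  have hright : rightE ⊆ K := image_Γr_bottomE ▸ hrot _ hbottom
  have htop : topE ⊆ K := image_Γr_rightE ▸ hrot _ hright
  exact ⟨bottomE_eq_biUnion, hbottom, hright, htop, image_Γr_topE ▸ hrot _ htop⟩
end
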